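/- Let λ be an n-partition, π an n-permutation, and T a semistandard tableau of shape λ. The following three conditions are equivalent: (i) S(T) ≤ Y_λ(π) (entrywise); (ii) T(l,k) ∈ A_λ(T,π;l,k) for every box (l,k) of λ; (iii) T(l,k) ∈ B_λ(T,π;l,k) for every box (l,k) of λ. In particular, the eastern condition (ii) and the southwestern condition (iii) are equivalent to each other. -/

import Mathlib

/-
Common combinatorial set-up for "Tableaux for Key Polynomials, Demazure
Characters, and Atoms" (Proctor–Willis).

Conventions: a box `(j, i)` means column `j`, row `i`, both 1-indexed.
Partial (remnant) tableaux are encoded by their column-length functions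
`c : ℕ → ℕ` (each column of a remnant is a top segment of the original
column), together with the ambient value function `T : ℕ → ℕ → ℕ`.
-/

open scoped BigOperators Classical

noncomputable section

namespace KeyPoly

open MvPolynomial

/-- An `n`-partition `λ = (λ_1, …, λ_n)` with `λ_1 ≥ … ≥ λ_n ≥ 0`,
recorded as a function on `1, …, n`, vanishing beyond `n`. -/
structure NPartition (n : ℕ) where
  part : ℕ → ℕ
  antitone : ∀ ⦃i j : ℕ⦄, 1 ≤ i → i ≤ j → part j ≤ part i
  outside : ∀ i : ℕ, n < i → part i = 0

variable {n : ℕ}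

/-- The column length `ζ_j` of the Young diagram of `λ`. -/
def zeta (lam : NPartition n) (j : ℕ) : ℕ :=
  ((Finset.Icc 1 n).filter fun i => j ≤ lam.part i).card

/-- The box `(j,i)` (column `j`, row `i`) belongs to the diagram of `λ`. -/
def InShape (lam : NPartition n) (j i : ℕ) : Prop :=
  1 ≤ j ∧ 1 ≤ i ∧ i ≤ n ∧ j ≤ lam.part i

/-- The boxes of the diagram of `λ`, as a finite set of pairs (column, row). -/
def boxes (lam : NPartition n) : Finset (ℕ × ℕ) :=
  (Finset.Icc 1 (lam.part 1) ×ˢ Finset.Icc 1 n).filter fun b => b.1 ≤ lam.part b.2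

/-- `T` is a semistandard tableau of shape `λ` with values in `[1,n]`:
rows weakly increase eastward, columns strictly increase southward. -/
def IsSSYT (lam : NPartition n) (T : ℕ → ℕ → ℕ) : Prop :=
  (∀ j i, InShape lam j i → 1 ≤ T j i ∧ T j i ≤ n) ∧
  (∀ j i, InShape lam (j + 1) i → T j i ≤ T (j + 1) i) ∧
  (∀ j i, InShape lam j (i + 1) → T j i < T j (i + 1))

/-- Normalization: the filling vanishes outside the shape. -/
def ZeroOutside (lam : NPartition n) (T : ℕ → ℕ → ℕ) : Prop :=
  ∀ j i, ¬ InShape lam j i → T j i = 0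

/-- `T(l, k+1)`, with the boundary convention `n+1` when `k = ζ_l`. -/
def south (lam : NPartition n) (T : ℕ → ℕ → ℕ) (l k : ℕ) : ℕ :=
  if InShape lam l (k + 1) then T l (k + 1) else n + 1

/-- `T(l+1, k)`, with the boundary convention `n` when `l = λ_k`. -/
def east (lam : NPartition n) (T : ℕ → ℕ → ℕ) (l k : ℕ) : ℕ :=
  if InShape lam (l + 1) k then T (l + 1) k else n

/-- An `n`-permutation: a tuple `(p 1, …, p n)` of distinct entries from `[1,n]`. -/
def IsNPerm (n : ℕ) (p : ℕ → ℕ) : Prop :=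
  Set.BijOn p (Set.Icc 1 n) (Set.Icc 1 n)

/-- The `λ`-key `Y_λ(π)`: column `j` is `π_1, …, π_{ζ_j}` sorted increasingly
(from top to bottom); zero outside the shape. -/
def keyTab (lam : NPartition n) (p : ℕ → ℕ) (j i : ℕ) : ℕ :=
  if InShape lam j i then
    (((Finset.Icc 1 (zeta lam j)).image p).sort (· ≤ ·)).getD (i - 1) 0
  else 0

/-- A semistandard `T` is a key if the values of each column contain the
values of every column to its east. -/
def colSet (lam : NPartition n) (T : ℕ → ℕ → ℕ) (j : ℕ) : Finset ℕ :=
  (Finset.Icc 1 (zeta lam j)).image (T j)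

def IsKey (lam : NPartition n) (T : ℕ → ℕ → ℕ) : Prop :=
  ∀ j j' : ℕ, 1 ≤ j → j ≤ j' → j' ≤ lam.part 1 → colSet lam T j' ⊆ colSet lam T j

/-! ### The (right) scanning method -/

/-- The next column of the scanning path: the earliest column `h' > h`
(up to `maxCol`) whose column bottom in the remnant `c` is nonempty and has
value weakly larger than the bottom value of column `h`. -/
def nextCol (T : ℕ → ℕ → ℕ) (c : ℕ → ℕ) (maxCol h : ℕ) : Option ℕ :=
  (List.range' (h + 1) (maxCol - h)).find?
    (fun h' => decide (0 < c h' ∧ T h (c h) ≤ T h' (c h')))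

/-- Columns of the scanning path (EWIS of column bottoms) starting at column `h`,
with explicit fuel. -/
def pathColsAux (T : ℕ → ℕ → ℕ) (c : ℕ → ℕ) (maxCol : ℕ) : ℕ → ℕ → List ℕ
  | 0, h => [h]
  | fuel + 1, h =>
    match nextCol T c maxCol h with
    | none => [h]
    | some h' => h :: pathColsAux T c maxCol fuel h'

/-- Columns of the scanning path starting at the bottom of column `j` of the
remnant with column lengths `c`. -/
def pathCols (T : ℕ → ℕ → ℕ) (c : ℕ → ℕ) (maxCol j : ℕ) : List ℕ :=
  pathColsAux T c maxCol maxCol j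

/-- Remove the scanning path starting in column `j` from the remnant `c`. -/
def removePath (T : ℕ → ℕ → ℕ) (c : ℕ → ℕ) (maxCol j : ℕ) : ℕ → ℕ :=
  fun h => if h ∈ pathCols T c maxCol j then c h - 1 else c h

/-- Iterate path removal `r` times, always starting from column `j`. -/
def remnantIter (T : ℕ → ℕ → ℕ) (c0 : ℕ → ℕ) (maxCol j : ℕ) : ℕ → ℕ → ℕ
  | 0 => c0
  | r + 1 => removePath T (remnantIter T c0 maxCol j r) maxCol j

/-- Column lengths of the remnant tableau `T^{(j;i)}`. -/
def remnant (lam : NPartition n) (T : ℕ → ℕ → ℕ) (j i : ℕ) : ℕ → ℕ :=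
  remnantIter T (zeta lam) (lam.part 1) j (zeta lam j - i)

/-- The scanning path `P(T; j, i)`, recorded by its list of columns. -/
def scanPath (lam : NPartition n) (T : ℕ → ℕ → ℕ) (j i : ℕ) : List ℕ :=
  pathCols T (remnant lam T j i) (lam.part 1) j

/-- The scanning value `S(T; j, i)`: the last value of the EWIS from `(j,i)`. -/
def scanValue (lam : NPartition n) (T : ℕ → ℕ → ℕ) (j i : ℕ) : ℕ :=
  T ((scanPath lam T j i).getLastD j)
    (remnant lam T j i ((scanPath lam T j i).getLastD j))

/-- The box `(l,k)` lies on the scanning path `P(T; j, i)`. -/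
def InScanPath (lam : NPartition n) (T : ℕ → ℕ → ℕ) (j i l k : ℕ) : Prop :=
  l ∈ scanPath lam T j i ∧ k = remnant lam T j i l

/-- `m(U)` where `U` is the remnant with column lengths `c` restricted to the
columns `l+1, …, maxCol`:  the maximum of the column-bottom values, with the
convention `m((())) = 1` for the empty tableau. -/
def mEast (T : ℕ → ℕ → ℕ) (c : ℕ → ℕ) (maxCol l : ℕ) : ℕ :=
  max 1 (((Finset.Icc (l + 1) maxCol).filter fun h => 0 < c h).sup fun h => T h (c h))

/-! ### The condition sets A, C, and B -/

/-- The set `A_λ(T, π; l, k)`. -/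
def Aset (lam : NPartition n) (T : ℕ → ℕ → ℕ) (p : ℕ → ℕ) (l k : ℕ) : Set ℕ :=
  if keyTab lam p l k < mEast T (remnant lam T l k) (lam.part 1) l then (∅ : Set ℕ)
  else Set.Icc k (min (keyTab lam p l k) (min (south lam T l k - 1) (east lam T l k)))

/-- The set `C_λ(T, π; l, k)`. -/
def Cset (lam : NPartition n) (T : ℕ → ℕ → ℕ) (p : ℕ → ℕ) (l k : ℕ) : Set ℕ :=
  if l = lam.part 1 then {keyTab lam p l k}
  else if keyTab lam p l k < mEast T (remnant lam T l k) (lam.part 1) l then (∅ : Set ℕ)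
  else if mEast T (remnant lam T l k) (lam.part 1) l = keyTab lam p l k then
    Set.Icc k (min (keyTab lam p l k) (min (south lam T l k - 1) (east lam T l k)))
  else {keyTab lam p l k} ∩ Set.Icc k (min (south lam T l k - 1) (east lam T l k))

/-- The row index `a(l,k;j)`:  the `i` with `(l-1,k) ∈ P(T;j,i)`
(convention `a(l,k;l) = k`). -/
def aIdx (lam : NPartition n) (T : ℕ → ℕ → ℕ) (l k j : ℕ) : ℕ :=
  if j = l then k
  else ((Finset.Icc 1 (zeta lam j)).filter fun i => InScanPath lam T j i (l - 1) k).sup id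

/-- The row index `b(l,k;j)`:  the `i` with `(l,k+1) ∈ P(T;j,i)` when `k < ζ_l`,
and `ζ_j + 1` when `k = ζ_l` (convention `b(l,k;l) = k+1`). -/
def bIdx (lam : NPartition n) (T : ℕ → ℕ → ℕ) (l k j : ℕ) : ℕ :=
  if j = l then k + 1
  else if k = zeta lam l then zeta lam j + 1
  else ((Finset.Icc 1 (zeta lam j)).filter fun i => InScanPath lam T j i l (k + 1)).sup id

/-- `E(l,k;j,i)`:  the value of `T` at the box `(h,m)` of `P(T;j,i)` with `h < l`
maximal (convention `E(l,k;l,k) = k`). -/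
def Epath (lam : NPartition n) (T : ℕ → ℕ → ℕ) (l k j i : ℕ) : ℕ :=
  if j = l then k
  else
    T (((scanPath lam T j i).filter fun h => decide (h < l)).foldr max 0)
      (remnant lam T j i (((scanPath lam T j i).filter fun h => decide (h < l)).foldr max 0))

/-- The set `B_λ(T, π; l, k) = ⋂_{j=1}^{l} ⋃_{i=a(j)}^{b(j)-1} [E(l,k;j,i), Y_λ(π)(j,i)]`. -/
def Bset (lam : NPartition n) (T : ℕ → ℕ → ℕ) (p : ℕ → ℕ) (l k : ℕ) : Set ℕ :=
  {v | ∀ j, 1 ≤ j → j ≤ l →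
    ∃ i, aIdx lam T l k j ≤ i ∧ i + 1 ≤ bIdx lam T l k j ∧
      Epath lam T l k j i ≤ v ∧ v ≤ keyTab lam p j i}

/-! ### The left scanning method -/

/-- The largest row `r ≤ c j` of column `j` whose value is at most `x`. -/
def maxRow (T : ℕ → ℕ → ℕ) (c : ℕ → ℕ) (j x : ℕ) : ℕ :=
  ((Finset.Icc 1 (c j)).filter fun r => T j r ≤ x).sup id

/-- The rows of the maximizing weakly decreasing sequence through columns
`j, j-1, …, 1` with initial bound `x`, in a remnant with column lengths `c`. -/
def leftRows (T : ℕ → ℕ → ℕ) (c : ℕ → ℕ) : ℕ → ℕ → List ℕ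
  | 0, _ => []
  | j + 1, x => maxRow T c (j + 1) x :: leftRows T c j (T (j + 1) (maxRow T c (j + 1) x))

/-- The column-1 value at the end of the left scanning path originating at `(j, r)`. -/
def leftEndVal (T : ℕ → ℕ → ℕ) (c : ℕ → ℕ) (j r : ℕ) : ℕ :=
  T 1 ((leftRows T c j (T j r)).getLastD 0)

/-- Remove the left scanning path originating at `(l, c l)`, together with
all values beneath it, from the remnant `c`. -/
def leftRemovePath (T : ℕ → ℕ → ℕ) (c : ℕ → ℕ) (l : ℕ) : ℕ → ℕ :=
  fun j =>
    if 1 ≤ j ∧ j ≤ l then (leftRows T c l (T l (c l))).getD (l - j) 0 - 1 else c j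

/-- Iterate left-path removal `r` times (always for column `l`). -/
def leftRemnantIter (T : ℕ → ℕ → ℕ) (c0 : ℕ → ℕ) (l : ℕ) : ℕ → ℕ → ℕ
  | 0 => c0
  | r + 1 => leftRemovePath T (leftRemnantIter T c0 l r) l

/-- Column lengths of the left remnant used to compute `M(T; l, i)`:
`T` restricted to its first `l` columns with the left scanning paths
originating at `(l, ζ_l), …, (l, i+1)` (and everything beneath them) removed. -/
def leftRemnant (lam : NPartition n) (T : ℕ → ℕ → ℕ) (l i : ℕ) : ℕ → ℕ :=
  leftRemnantIter T (zeta lam) l (zeta lam l - i)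

/-- The left scanning value `M(T; l, i)`. -/
def leftScanValue (lam : NPartition n) (T : ℕ → ℕ → ℕ) (l i : ℕ) : ℕ :=
  leftEndVal T (leftRemnant lam T l i) l i

/-! ### The condition sets F and G -/

/-- The set `F_λ(T, σ; l, k)`. -/
def Fset (lam : NPartition n) (T : ℕ → ℕ → ℕ) (sg : ℕ → ℕ) (l k : ℕ) : Set ℕ :=
  if l = 1 then Set.Icc (keyTab lam sg 1 k) (south lam T 1 k - 1)
  else
    let U := leftRemnant lam T l k
    let q := maxRow T U (l - 1) (south lam T l k - 1)
    let P := (Finset.Icc 1 q).filter fun h => keyTab lam sg l k ≤ leftEndVal T U (l - 1) h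
    if hP : P.Nonempty then Set.Icc (T (l - 1) (P.min' hP)) (south lam T l k - 1)
    else (∅ : Set ℕ)

/-- The set `G_λ(T, σ; l, k)`. -/
def Gset (lam : NPartition n) (T : ℕ → ℕ → ℕ) (sg : ℕ → ℕ) (l k : ℕ) : Set ℕ :=
  if l = 1 then {keyTab lam sg 1 k}
  else
    let U := leftRemnant lam T l k
    let q := maxRow T U (l - 1) (south lam T l k - 1)
    let P := (Finset.Icc 1 q).filter fun h => leftEndVal T U (l - 1) h = keyTab lam sg l k
    if hP : P.Nonempty then
      Set.Icc (T (l - 1) (P.min' hP))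
        (min ((if P.max' hP + 1 ≤ U (l - 1) then T (l - 1) (P.max' hP + 1) else n + 1) - 1)
          (south lam T l k - 1))
    else (∅ : Set ℕ)

/-! ### Polynomials, divided differences, words -/

/-- Polynomials in the variables `X 1, …, X n` (indexed by `ℕ`) over `ℚ`. -/
abbrev Poly : Type := MvPolynomial ℕ ℚ

/-- The action of `s_i` on polynomials: interchange `x_i` and `x_{i+1}`. -/
def sOp (i : ℕ) (P : Poly) : Poly := rename (Equiv.swap i (i + 1)) P

/-- The divided difference operator
`ρ_i = (x_i - x_{i+1})⁻¹ ∘ (1 - s_i) ∘ x_i`, defined as the unique polynomial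
`Q` with `(x_i - x_{i+1}) Q = x_i P - s_i (x_i P)`. -/
def rhoOp (i : ℕ) (P : Poly) : Poly :=
  if h : ∃ Q : Poly, (X i - X (i + 1)) * Q = X i * P - sOp i (X i * P) then h.choose
  else 0

/-- The operator `ρ̄_i := ρ_i - 1`. -/
def rhoBarOp (i : ℕ) (P : Poly) : Poly := rhoOp i P - P

/-- Apply operators indexed by a word `[i_t, …, i_1]`, rightmost first:
`applyOps f [i_t, …, i_1] P = f i_t (⋯ (f i_1 P))`. -/
def applyOps (f : ℕ → Poly → Poly) : List ℕ → Poly → Poly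
  | [], P => P
  | i :: w, P => f i (applyOps f w P)

/-- The monomial `x_1^{λ_1} ⋯ x_n^{λ_n}`. -/
def lamMonomial (lam : NPartition n) : Poly :=
  ∏ i ∈ Finset.Icc 1 n, X i ^ lam.part i

/-- The weight monomial `x^T = ∏ x_i^{c_i}` of the filling `T`. -/
def weight (lam : NPartition n) (T : ℕ → ℕ → ℕ) : Poly :=
  ∏ b ∈ boxes lam, X (T b.1 b.2)

/-- The simple reflection `s_i` acting by value. -/
def swapVal (i v : ℕ) : ℕ := if v = i then i + 1 else if v = i + 1 then i else v

/-- The permutation `s_{i_t} ⋯ s_{i_1}.(1, 2, …, n)` obtained by applying the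
word `w = [i_t, …, i_1]` (rightmost letter first, each acting by value) to the
identity. -/
def permOfWord (w : List ℕ) : ℕ → ℕ := w.foldr (fun i f => swapVal i ∘ f) id

/-- `w` is a word in letters `s_1, …, s_{n-1}` producing `π` from `(1, …, n)`. -/
def WordFor (n : ℕ) (w : List ℕ) (p : ℕ → ℕ) : Prop :=
  (∀ i ∈ w, 1 ≤ i ∧ i + 1 ≤ n) ∧ ∀ t, 1 ≤ t → t ≤ n → permOfWord w t = p t

/-- `w` is a reduced word for `π`: it produces `π` with minimal length. -/
def IsReducedWord (n : ℕ) (w : List ℕ) (p : ℕ → ℕ) : Prop :=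
  WordFor n w p ∧ ∀ w' : List ℕ, WordFor n w' p → w.length ≤ w'.length

/-- The atom `c_λ(π;x) = ρ̄_{i_t} ⋯ ρ̄_{i_1} . x_1^{λ_1} ⋯ x_n^{λ_n}`, computed
from a choice of reduced word for `π` (it is independent of this choice). -/
def atomPoly (lam : NPartition n) (p : ℕ → ℕ) : Poly :=
  if h : ∃ w : List ℕ, IsReducedWord n w p then
    applyOps rhoBarOp h.choose (lamMonomial lam)
  else 0

/-! ### `S_n^λ` -/

/-- The set `Q_λ` of distinct column lengths of `λ`. -/
def Qset (lam : NPartition n) : Finset ℕ := (Finset.Icc 1 (lam.part 1)).image (zeta lam)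

/-- `π ∈ S_n^λ`: an `n`-permutation increasing on each block `[q_{r-1}+1, q_r]`
cut out by the column lengths of `λ` (equivalently, `π_i < π_j` whenever
`i < j` and no element of `Q_λ` lies in `[i, j)`). -/
def InSnLam (lam : NPartition n) (p : ℕ → ℕ) : Prop :=
  IsNPerm n p ∧ ∀ i j, 1 ≤ i → i < j → j ≤ n →
    (∀ q ∈ Qset lam, q < i ∨ j ≤ q) → p i < p j

end KeyPoly

/-!
The scanning path from `(l, k)` is the earliest weakly increasing sequence of column bottoms of
the remnant `T^{(l;k)}`, so it ends at the largest of `T(l,k)` and the bottom values east of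
column `l`. Hence `S(T;l,k) ≤ Y(l,k)` exactly when `T(l,k) ≤ Y(l,k)` and `m(U) ≤ Y(l,k)`,
which is the `A`-condition.

Every box `(l,k)` is removed by exactly one path `P(T;j,i)` from each column `j ≤ l`; on that
path `a(j) ≤ i < b(j)` and `E(l,k;j,i) ≤ T(l,k) ≤ S(T;j,i)`, so `S(T) ≤ Y` puts `T(l,k)` in
the `B`-set. Conversely, the `j = l` part of the `B`-condition at a bottom box `(h,m)` of
`T^{(l;k)}` east of column `l` gives an `i` with `T(h,m) ≤ Y(l,i)`. If `i > k`, then `i < b`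
keeps `(h,m)` at the bottom of `T^{(l;i)}` and `E ≤ T(h,m)` puts it on `P(T;l,i)`, so it cannot
survive in `T^{(l;k)}`. Thus `i ≤ k` and `T(h,m) ≤ Y(l,k)`.
-/

namespace KeyPoly

theorem find?_range'_le {p : ℕ → Bool} {s m a b : ℕ} (hb : b ∈ List.range' s m)
    (hpb : p b) (ha : (List.range' s m).find? p = some a) : a ≤ b := by
  induction m generalizing s with
  | zero => simp at hb
  | succ m ih =>
    rw [List.range'_succ] at hb ha
    rw [List.find?_cons] at ha
    rcases List.mem_cons.1 hb with rfl | hb'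
    · rw [hpb] at ha
      exact (Option.some.inj ha).ge
    · cases hps : p s
      · rw [hps] at ha
        exact ih hb' ha
      · rw [hps, Option.some.injEq] at ha
        have := List.mem_range'_1.1 hb'
        omega

theorem exists_le_and_lt_succ {f : ℕ → ℕ} {k N : ℕ} (h0 : k ≤ f 0) (hN : f N < k) :
    ∃ r < N, k ≤ f r ∧ f (r + 1) < k := by
  induction N with
  | zero => omega
  | succ m ih =>
    rcases Nat.lt_or_ge (f m) k with hlt | hge
    · obtain ⟨r, h1, h2, h3⟩ := ih hlt
      exact ⟨r, by omega, h2, h3⟩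
    · exact ⟨m, by omega, hge, hN⟩

section ScanningPath

variable {T : ℕ → ℕ → ℕ} {c : ℕ → ℕ} {maxCol : ℕ}

theorem nextCol_spec {h h₂ : ℕ} (hh : nextCol T c maxCol h = some h₂) :
    h < h₂ ∧ h₂ ≤ maxCol ∧ 0 < c h₂ ∧ T h (c h) ≤ T h₂ (c h₂) := by
  have hm := List.find?_some hh
  have hmem := List.mem_range'_1.1 (List.mem_of_find?_eq_some hh)
  simp only [decide_eq_true_eq] at hm
  exact ⟨by omega, by omega, hm.1, hm.2⟩

theorem exists_nextCol_le {h h' : ℕ} (hlt : h < h') (hle : h' ≤ maxCol)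
    (hc : 0 < c h') (hv : T h (c h) ≤ T h' (c h')) :
    ∃ h₂, nextCol T c maxCol h = some h₂ ∧ h₂ ≤ h' := by
  have hmem : h' ∈ List.range' (h + 1) (maxCol - h) := by
    rw [List.mem_range'_1]; omega
  have hp : decide (0 < c h' ∧ T h (c h) ≤ T h' (c h')) = true := by simp [hc, hv]
  cases hfind : nextCol T c maxCol h with
  | none => exact absurd hp (by simpa using List.find?_eq_none.1 hfind h' hmem)
  | some h₂ => exact ⟨h₂, rfl, find?_range'_le hmem hp hfind⟩

theorem pathColsAux_eq_cons (fuel h : ℕ) :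
    ∃ t, pathColsAux T c maxCol fuel h = h :: t := by
  cases fuel with
  | zero => exact ⟨[], rfl⟩
  | succ f =>
    unfold pathColsAux
    cases nextCol T c maxCol h with
    | none => exact ⟨[], rfl⟩
    | some h' => exact ⟨_, rfl⟩

theorem self_mem_pathColsAux (fuel h : ℕ) : h ∈ pathColsAux T c maxCol fuel h := by
  obtain ⟨t, ht⟩ := pathColsAux_eq_cons (T := T) (c := c) (maxCol := maxCol) fuel h
  rw [ht]; exact List.mem_cons_self

theorem pathColsAux_succ_of_nextCol_eq_some {f g h₂ : ℕ}
    (hnc : nextCol T c maxCol g = some h₂) :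
    pathColsAux T c maxCol (f + 1) g = g :: pathColsAux T c maxCol f h₂ := by
  rw [pathColsAux, hnc]

theorem pathColsAux_succ_of_nextCol_eq_none {f g : ℕ} (hnc : nextCol T c maxCol g = none) :
    pathColsAux T c maxCol (f + 1) g = [g] := by
  rw [pathColsAux, hnc]

theorem getLastD_pathColsAux_succ {f g h₂ d : ℕ} (hnc : nextCol T c maxCol g = some h₂) :
    (pathColsAux T c maxCol (f + 1) g).getLastD d =
      (pathColsAux T c maxCol f h₂).getLastD h₂ := by
  obtain ⟨t, ht⟩ := pathColsAux_eq_cons (T := T) (c := c) (maxCol := maxCol) f h₂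
  rw [pathColsAux_succ_of_nextCol_eq_some hnc, List.getLastD_cons, ht, List.getLastD_cons,
    List.getLastD_cons]

theorem eq_or_lt_of_mem_pathColsAux {fuel g x : ℕ} (hx : x ∈ pathColsAux T c maxCol fuel g) :
    x = g ∨ (g < x ∧ x ≤ maxCol ∧ 0 < c x) := by
  induction fuel generalizing g with
  | zero => exact Or.inl (List.mem_singleton.1 hx)
  | succ f ih =>
    cases hnc : nextCol T c maxCol g with
    | none =>
      rw [pathColsAux_succ_of_nextCol_eq_none hnc] at hx
      exact Or.inl (List.mem_singleton.1 hx)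
    | some h₂ =>
      rw [pathColsAux_succ_of_nextCol_eq_some hnc] at hx
      obtain ⟨h1, h2, h3, _⟩ := nextCol_spec hnc
      rcases List.mem_cons.1 hx with rfl | hx'
      · exact Or.inl rfl
      · rcases ih hx' with rfl | ⟨hh1, hh2, hh3⟩
        · exact Or.inr ⟨h1, h2, h3⟩
        · exact Or.inr ⟨h1.trans hh1, hh2, hh3⟩

theorem bottom_le_bottom_of_mem_pathColsAux {fuel g x : ℕ}
    (hx : x ∈ pathColsAux T c maxCol fuel g) :
    T g (c g) ≤ T x (c x) := by
  induction fuel generalizing g with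
  | zero => rw [List.mem_singleton.1 hx]
  | succ f ih =>
    cases hnc : nextCol T c maxCol g with
    | none => rw [pathColsAux_succ_of_nextCol_eq_none hnc, List.mem_singleton] at hx; rw [hx]
    | some h₂ =>
      rw [pathColsAux_succ_of_nextCol_eq_some hnc] at hx
      rcases List.mem_cons.1 hx with rfl | hx'
      · exact le_rfl
      · exact (nextCol_spec hnc).2.2.2.trans (ih hx')

theorem bottom_le_bottom_of_mem_pathColsAux_of_lt {fuel g x y : ℕ}
    (hx : x ∈ pathColsAux T c maxCol fuel g) (hy : y ∈ pathColsAux T c maxCol fuel g)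
    (hxy : x < y) : T x (c x) ≤ T y (c y) := by
  induction fuel generalizing g with
  | zero =>
    have := List.mem_singleton.1 hx
    have := List.mem_singleton.1 hy
    omega
  | succ f ih =>
    cases hnc : nextCol T c maxCol g with
    | none =>
      rw [pathColsAux_succ_of_nextCol_eq_none hnc, List.mem_singleton] at hx hy; omega
    | some h₂ =>
      rw [pathColsAux_succ_of_nextCol_eq_some hnc] at hx hy
      have hgh := (nextCol_spec hnc).1
      rcases List.mem_cons.1 hx with rfl | hx' <;> rcases List.mem_cons.1 hy with rfl | hy'
      · omega
      · exact (nextCol_spec hnc).2.2.2.trans (bottom_le_bottom_of_mem_pathColsAux hy')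
      · rcases eq_or_lt_of_mem_pathColsAux hx' with rfl | ⟨h1, _, _⟩ <;> omega
      · exact ih hx' hy'

theorem getLastD_mem_pathColsAux (fuel g : ℕ) :
    (pathColsAux T c maxCol fuel g).getLastD g ∈ pathColsAux T c maxCol fuel g := by
  obtain ⟨t, ht⟩ := pathColsAux_eq_cons (T := T) (c := c) (maxCol := maxCol) fuel g
  rw [ht, List.getLastD_cons]
  exact List.getLastD_mem_cons

theorem le_getLastD_of_mem_pathColsAux {fuel g x : ℕ} (hx : x ∈ pathColsAux T c maxCol fuel g) :
    x ≤ (pathColsAux T c maxCol fuel g).getLastD g := by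
  induction fuel generalizing g x with
  | zero => rw [List.mem_singleton.1 hx]; rfl
  | succ f ih =>
    cases hnc : nextCol T c maxCol g with
    | none =>
      rw [pathColsAux_succ_of_nextCol_eq_none hnc, List.mem_singleton] at hx
      rw [pathColsAux_succ_of_nextCol_eq_none hnc, hx]; rfl
    | some h₂ =>
      rw [getLastD_pathColsAux_succ hnc]
      rw [pathColsAux_succ_of_nextCol_eq_some hnc] at hx
      rcases List.mem_cons.1 hx with rfl | hx'
      · exact (nextCol_spec hnc).1.le.trans (ih (self_mem_pathColsAux f h₂))
      · exact ih hx'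

theorem bottom_le_lastBottom_of_mem_pathColsAux {fuel g x : ℕ}
    (hx : x ∈ pathColsAux T c maxCol fuel g) :
    T x (c x) ≤ T ((pathColsAux T c maxCol fuel g).getLastD g)
      (c ((pathColsAux T c maxCol fuel g).getLastD g)) := by
  rcases (le_getLastD_of_mem_pathColsAux hx).lt_or_eq with h | h
  · exact bottom_le_bottom_of_mem_pathColsAux_of_lt hx (getLastD_mem_pathColsAux fuel g) h
  · rw [← h]

theorem bottom_le_lastBottom_of_le {fuel g h : ℕ} (hfuel : maxCol ≤ fuel + g) (hgh : g < h)
    (hhm : h ≤ maxCol) (hch : 0 < c h) (hv : T g (c g) ≤ T h (c h)) :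
    T h (c h) ≤ T ((pathColsAux T c maxCol fuel g).getLastD g)
      (c ((pathColsAux T c maxCol fuel g).getLastD g)) := by
  induction fuel generalizing g with
  | zero => omega
  | succ f ih =>
    obtain ⟨h₂, hnc, hh₂⟩ := exists_nextCol_le hgh hhm hch hv
    have hgh₂ := (nextCol_spec hnc).1
    rw [getLastD_pathColsAux_succ hnc]
    have hlast := bottom_le_lastBottom_of_mem_pathColsAux
      (self_mem_pathColsAux (T := T) (c := c) (maxCol := maxCol) f h₂)
    rcases hh₂.eq_or_lt with rfl | hlt
    · exact hlast
    · rcases le_or_gt (T h₂ (c h₂)) (T h (c h)) with hle | hgt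
      · exact ih (by omega) hlt hle
      · exact hgt.le.trans hlast

theorem mem_pathColsAux_of_nextCol {fuel g x h₂ : ℕ} (hfuel : maxCol ≤ fuel + g)
    (hx : x ∈ pathColsAux T c maxCol fuel g)
    (hnc : nextCol T c maxCol x = some h₂) : h₂ ∈ pathColsAux T c maxCol fuel g := by
  induction fuel generalizing g with
  | zero =>
    rw [List.mem_singleton.1 hx] at hnc
    have := nextCol_spec hnc
    omega
  | succ f ih =>
    cases hnc₀ : nextCol T c maxCol g with
    | none =>
      rw [pathColsAux_succ_of_nextCol_eq_none hnc₀, List.mem_singleton] at hx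
      rw [hx, hnc₀] at hnc
      exact absurd hnc (by simp)
    | some k₂ =>
      rw [pathColsAux_succ_of_nextCol_eq_some hnc₀] at hx ⊢
      rcases List.mem_cons.1 hx with rfl | hx'
      · rw [hnc₀, Option.some.injEq] at hnc
        exact hnc ▸ List.mem_cons_of_mem _ (self_mem_pathColsAux f k₂)
      · have hk := (nextCol_spec hnc₀).1
        exact List.mem_cons_of_mem _ (ih (by omega) hx')

theorem mem_pathColsAux_of_le {fuel g h x : ℕ} (hfuel : maxCol ≤ fuel + g)
    (hx : x ∈ pathColsAux T c maxCol fuel g)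
    (hmax : ∀ y ∈ pathColsAux T c maxCol fuel g, y < h → y ≤ x)
    (hxh : x < h) (hhm : h ≤ maxCol) (hch : 0 < c h)
    (hv : T x (c x) ≤ T h (c h)) : h ∈ pathColsAux T c maxCol fuel g := by
  obtain ⟨h₂, hnc, hh₂⟩ := exists_nextCol_le hxh hhm hch hv
  have hmem := mem_pathColsAux_of_nextCol hfuel hx hnc
  rcases hh₂.eq_or_lt with rfl | hlt
  · exact hmem
  · have := (nextCol_spec hnc).1
    exact absurd (hmax h₂ hmem hlt) (by omega)

end ScanningPath

section Shape

variable {n : ℕ} {lam : NPartition n}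

theorem zeta_le (lam : NPartition n) (h : ℕ) : zeta lam h ≤ n := by
  unfold zeta
  simpa using Finset.card_filter_le (Finset.Icc 1 n) fun i => h ≤ lam.part i

theorem le_zeta_iff {h k : ℕ} (hk : 1 ≤ k) :
    k ≤ zeta lam h ↔ k ≤ n ∧ h ≤ lam.part k := by
  constructor
  · intro hle
    by_contra hcon
    have hsub : (Finset.Icc 1 n).filter (fun i => h ≤ lam.part i) ⊆ Finset.Icc 1 (k - 1) := by
      intro i hi
      rw [Finset.mem_filter, Finset.mem_Icc] at hi
      rw [Finset.mem_Icc]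
      refine ⟨hi.1.1, Nat.le_sub_one_of_lt (lt_of_not_ge fun hki => hcon ?_)⟩
      exact ⟨hki.trans hi.1.2, hi.2.trans (lam.antitone hk hki)⟩
    have := Finset.card_le_card hsub
    rw [Nat.card_Icc] at this
    unfold zeta at hle
    omega
  · rintro ⟨hkn, hpk⟩
    have hsub : Finset.Icc 1 k ⊆ (Finset.Icc 1 n).filter fun i => h ≤ lam.part i := by
      intro i hi
      rw [Finset.mem_Icc] at hi
      rw [Finset.mem_filter, Finset.mem_Icc]
      exact ⟨⟨hi.1, hi.2.trans hkn⟩, hpk.trans (lam.antitone hi.1 hi.2)⟩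
    unfold zeta
    simpa using Finset.card_le_card hsub

theorem inShape_iff {j i : ℕ} : InShape lam j i ↔ 1 ≤ j ∧ 1 ≤ i ∧ i ≤ zeta lam j := by
  constructor
  · rintro ⟨h1, h2, h3, h4⟩
    exact ⟨h1, h2, (le_zeta_iff h2).2 ⟨h3, h4⟩⟩
  · rintro ⟨h1, h2, h3⟩
    have := (le_zeta_iff h2).1 h3
    exact ⟨h1, h2, this.1, this.2⟩

theorem InShape.of_le {j i i' : ℕ} (hs : InShape lam j i) (hi' : 1 ≤ i') (hii : i' ≤ i) :
    InShape lam j i' :=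
  ⟨hs.1, hi', hii.trans hs.2.2.1, hs.2.2.2.trans (lam.antitone hi' hii)⟩

theorem zeta_antitone : Antitone (zeta lam) := fun _ _ hgh =>
  Finset.card_le_card (Finset.monotone_filter_right _ fun _ _ hi => hgh.trans hi)

theorem zeta_eq_zero_of_lt {h : ℕ} (hh : lam.part 1 < h) : zeta lam h = 0 := by
  rw [zeta, Finset.card_eq_zero, Finset.filter_eq_empty_iff]
  intro i hi
  have : lam.part i ≤ lam.part 1 := lam.antitone le_rfl (Finset.mem_Icc.1 hi).1
  omega

end Shape

namespace IsSSYT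

variable {n : ℕ} {lam : NPartition n} {T : ℕ → ℕ → ℕ} (hT : IsSSYT lam T)
include hT

theorem one_le {l k : ℕ} (hs : InShape lam l k) : 1 ≤ T l k := (hT.1 l k hs).1

theorem row_le {l k : ℕ} (hs : InShape lam l k) : k ≤ T l k := by
  induction k with
  | zero => omega
  | succ m ih =>
    rcases Nat.eq_zero_or_pos m with rfl | hm
    · exact hT.one_le hs
    · have := hT.2.2 l m hs
      have := ih (hs.of_le hm m.le_succ)
      omega

theorem le_south_sub_one {l k : ℕ} (hs : InShape lam l k) : T l k ≤ south lam T l k - 1 := by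
  unfold south
  split
  · have := hT.2.2 l k ‹_›
    omega
  · have := (hT.1 l k hs).2
    omega

theorem le_east {l k : ℕ} (hs : InShape lam l k) : T l k ≤ east lam T l k := by
  unfold east
  split
  · exact hT.2.1 l k ‹_›
  · exact (hT.1 l k hs).2

end IsSSYT

section Key

variable {n : ℕ} {lam : NPartition n} {p : ℕ → ℕ}

theorem length_sort_image_zeta (hp : Set.InjOn p (Set.Icc 1 n)) (j : ℕ) :
    (((Finset.Icc 1 (zeta lam j)).image p).sort (· ≤ ·)).length = zeta lam j := by
  rw [Finset.length_sort, Finset.card_image_of_injOn, Nat.card_Icc, Nat.add_sub_cancel]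
  refine hp.mono ?_
  rw [Finset.coe_Icc]
  exact Set.Icc_subset_Icc_right (zeta_le lam j)

theorem keyTab_mono (hp : Set.InjOn p (Set.Icc 1 n)) {j i i' : ℕ} (hi : 1 ≤ i) (hii : i ≤ i')
    (hs' : InShape lam j i') : keyTab lam p j i ≤ keyTab lam p j i' := by
  have hz := (inShape_iff.1 hs').2.2
  have hlen := length_sort_image_zeta (lam := lam) hp j
  unfold keyTab
  rw [if_pos (hs'.of_le hi hii), if_pos hs', List.getD_eq_getElem?_getD,
    List.getD_eq_getElem?_getD, List.getElem?_eq_getElem (by omega),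
    List.getElem?_eq_getElem (by omega)]
  exact (Finset.pairwise_sort _ _).rel_get_of_le (a := ⟨i - 1, by omega⟩)
    (b := ⟨i' - 1, by omega⟩) (Fin.mk_le_mk.2 (by omega))

theorem inShape_of_keyTab_pos {j i : ℕ} (hk : 0 < keyTab lam p j i) : InShape lam j i := by
  by_contra hc
  rw [keyTab, if_neg hc] at hk
  exact hk.false

end Key

section RemovePath

variable {T : ℕ → ℕ → ℕ} {c : ℕ → ℕ} {maxCol : ℕ}

theorem removePath_le (j h : ℕ) : removePath T c maxCol j h ≤ c h := by
  unfold removePath; split <;> omega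

theorem sub_one_le_removePath (j h : ℕ) : c h - 1 ≤ removePath T c maxCol j h := by
  unfold removePath; split <;> omega

theorem removePath_of_mem {j h : ℕ} (hm : h ∈ pathCols T c maxCol j) :
    removePath T c maxCol j h = c h - 1 :=
  if_pos hm

theorem removePath_of_not_mem {j h : ℕ} (hm : h ∉ pathCols T c maxCol j) :
    removePath T c maxCol j h = c h :=
  if_neg hm

end RemovePath

/-- Shape invariants of the column lengths `c` of a remnant obtained from `λ` by removing `r`
scanning paths starting in column `j`. -/
structure IsScanRemnant {n : ℕ} (lam : NPartition n) (j r : ℕ) (c : ℕ → ℕ) : Prop where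
  le_zeta : ∀ h, c h ≤ zeta lam h
  antitoneOn : AntitoneOn c (Set.Ici j)
  apply_self : c j = zeta lam j - r

section Remnant

variable {n : ℕ} {lam : NPartition n} {T : ℕ → ℕ → ℕ} {c : ℕ → ℕ}

theorem removePath_succ_le (hT : IsSSYT lam T) {j r g : ℕ} (inv : IsScanRemnant lam j r c)
    (hr : r < zeta lam j) (hg : j ≤ g) :
    removePath T c (lam.part 1) j (g + 1) ≤ removePath T c (lam.part 1) j g := by
  have hcg : c (g + 1) ≤ c g := inv.antitoneOn hg (hg.trans g.le_succ) g.le_succ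
  have hge := sub_one_le_removePath (T := T) (c := c) (maxCol := lam.part 1) j g
  by_cases hg1 : g + 1 ∈ pathCols T c (lam.part 1) j
  · rw [removePath_of_mem hg1]
    omega
  rw [removePath_of_not_mem hg1]
  by_cases hg0 : g ∉ pathCols T c (lam.part 1) j
  · rwa [removePath_of_not_mem hg0]
  rw [not_not] at hg0
  rw [removePath_of_mem hg0]
  have hcg0 : 0 < c g := by
    rcases eq_or_lt_of_mem_pathColsAux hg0 with rfl | ⟨_, _, h⟩
    · rw [inv.apply_self]; omega
    · exact h
  -- a column bottom level with the bottom of `g` would continue the path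
  by_contra hlt
  have heq : c (g + 1) = c g := by omega
  have hgm : g + 1 ≤ lam.part 1 := by
    by_contra hgm
    have := zeta_eq_zero_of_lt (lam := lam) (not_le.1 hgm)
    have := inv.le_zeta (g + 1)
    omega
  have hshape : InShape lam (g + 1) (c g) :=
    inShape_iff.2 ⟨by omega, hcg0, heq ▸ inv.le_zeta (g + 1)⟩
  refine hg1 (mem_pathColsAux_of_le (by omega) hg0 (fun y _ hy => by omega) (by omega) hgm
    (by omega) ?_)
  rw [heq]
  exact hT.2.1 g (c g) hshape

theorem isScanRemnant_removePath (hT : IsSSYT lam T) {j r : ℕ} (inv : IsScanRemnant lam j r c)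
    (hr : r < zeta lam j) : IsScanRemnant lam j (r + 1) (removePath T c (lam.part 1) j) where
  le_zeta h := (removePath_le j h).trans (inv.le_zeta h)
  antitoneOn := antitoneOn_nat_Ici_of_succ_le fun _ hg => removePath_succ_le hT inv hr hg
  apply_self := by
    rw [removePath_of_mem (self_mem_pathColsAux _ _), inv.apply_self]
    omega

theorem isScanRemnant_remnantIter (hT : IsSSYT lam T) {j r : ℕ} (hr : r ≤ zeta lam j) :
    IsScanRemnant lam j r (remnantIter T (zeta lam) (lam.part 1) j r) := by
  induction r with
  | zero => exact ⟨fun _ => le_rfl, zeta_antitone.antitoneOn _, rfl⟩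
  | succ m ih => exact isScanRemnant_removePath hT (ih (by omega)) (by omega)

theorem isScanRemnant_remnant (hT : IsSSYT lam T) (j i : ℕ) :
    IsScanRemnant lam j (zeta lam j - i) (remnant lam T j i) :=
  isScanRemnant_remnantIter hT (Nat.sub_le _ _)

theorem remnant_self (hT : IsSSYT lam T) {j i : ℕ} (hiz : i ≤ zeta lam j) :
    remnant lam T j i j = i := by
  rw [(isScanRemnant_remnant hT j i).apply_self]
  omega

theorem remnant_mono {j i i' : ℕ} (hii : i ≤ i') (h : ℕ) :
    remnant lam T j i h ≤ remnant lam T j i' h :=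
  antitone_nat_of_succ_le (f := remnantIter T (zeta lam) (lam.part 1) j)
    (fun _ h => removePath_le j h) (Nat.sub_le_sub_left hii _) h

theorem remnant_sub_one {j i : ℕ} (hi : 1 ≤ i) (hiz : i ≤ zeta lam j) :
    remnant lam T j (i - 1) = removePath T (remnant lam T j i) (lam.part 1) j := by
  unfold remnant
  rw [show zeta lam j - (i - 1) = (zeta lam j - i) + 1 by omega]
  rfl

theorem remnant_sub_one_of_mem {j i l : ℕ} (hi : 1 ≤ i) (hiz : i ≤ zeta lam j)
    (hl : l ∈ scanPath lam T j i) :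
    remnant lam T j (i - 1) l = remnant lam T j i l - 1 := by
  rw [remnant_sub_one hi hiz]
  exact removePath_of_mem hl

theorem exists_mem_scanPath (hT : IsSSYT lam T) {j l k : ℕ} (hjl : j ≤ l)
    (hs : InShape lam l k) :
    ∃ i, 1 ≤ i ∧ i ≤ zeta lam j ∧ l ∈ scanPath lam T j i ∧
      remnant lam T j i l = k := by
  obtain ⟨hl1, hk1, hkz⟩ := inShape_iff.1 hs
  have hzj : k ≤ zeta lam j := hkz.trans (zeta_antitone hjl)
  set f := remnantIter T (zeta lam) (lam.part 1) j
  have hfin : f (zeta lam j) l = 0 := by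
    have hinv := isScanRemnant_remnantIter hT (le_refl (zeta lam j))
    have := hinv.antitoneOn Set.self_mem_Ici hjl hjl
    rw [hinv.apply_self, Nat.sub_self] at this
    exact Nat.le_zero.1 this
  -- column `l` shrinks from `ζ_l ≥ k` to `0`, by at most one box per removed path
  obtain ⟨r, hr, hkr, hkr₁⟩ := exists_le_and_lt_succ (f := fun r => f r l) (k := k)
    (N := zeta lam j) hkz (by simp only [hfin]; omega)
  have hstep : f (r + 1) = removePath T (f r) (lam.part 1) j := rfl
  have hmem : l ∈ pathCols T (f r) (lam.part 1) j := by
    by_contra hc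
    simp only [hstep, removePath_of_not_mem hc] at hkr₁
    omega
  have hfr : zeta lam j - (zeta lam j - r) = r := by omega
  refine ⟨zeta lam j - r, by omega, by omega, ?_, ?_⟩
  · rwa [scanPath, remnant, hfr]
  · have := sub_one_le_removePath (T := T) (c := f r) (maxCol := lam.part 1) j l
    simp only [← hstep] at this
    rw [remnant, hfr]
    show f r l = k
    omega

end Remnant

theorem mEast_le_iff {T : ℕ → ℕ → ℕ} {c : ℕ → ℕ} {maxCol l y : ℕ} :
    mEast T c maxCol l ≤ y ↔
      1 ≤ y ∧ ∀ h, l < h → h ≤ maxCol → 0 < c h → T h (c h) ≤ y := by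
  simp only [mEast, max_le_iff, Finset.sup_le_iff, Finset.mem_filter, Finset.mem_Icc, and_imp,
    Nat.add_one_le_iff]

section Scan

variable {n : ℕ} {lam : NPartition n} {T : ℕ → ℕ → ℕ}

theorem scanValue_le_iff (hT : IsSSYT lam T) {l k y : ℕ} (hs : InShape lam l k) :
    scanValue lam T l k ≤ y ↔
      T l k ≤ y ∧ mEast T (remnant lam T l k) (lam.part 1) l ≤ y := by
  set c := remnant lam T l k
  set P := pathCols T c (lam.part 1) l
  have hcl : c l = k := remnant_self hT (inShape_iff.1 hs).2.2
  have hsv : scanValue lam T l k = T (P.getLastD l) (c (P.getLastD l)) := rfl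
  rw [hsv, mEast_le_iff]
  constructor
  · intro hle
    have hstart : T l k ≤ y :=
      hcl ▸ (bottom_le_lastBottom_of_mem_pathColsAux (self_mem_pathColsAux _ _)).trans hle
    refine ⟨hstart, (hT.one_le hs).trans hstart, fun h hlh hhm hch => ?_⟩
    rcases le_or_gt (T h (c h)) (T l (c l)) with hv | hv
    · rw [hcl] at hv
      exact hv.trans hstart
    · exact (bottom_le_lastBottom_of_le (Nat.le_add_right _ _) hlh hhm hch hv.le).trans hle
  · rintro ⟨h1, -, h2⟩
    have hlast : P.getLastD l ∈ P := getLastD_mem_pathColsAux _ _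
    rcases eq_or_lt_of_mem_pathColsAux hlast with heq | hlt
    · rwa [heq, hcl]
    · exact h2 _ hlt.1 hlt.2.1 hlt.2.2

theorem mem_Aset_iff_scanValue_le (hT : IsSSYT lam T) {p : ℕ → ℕ} {l k : ℕ}
    (hs : InShape lam l k) :
    T l k ∈ Aset lam T p l k ↔ scanValue lam T l k ≤ keyTab lam p l k := by
  rw [scanValue_le_iff hT hs, Aset]
  split_ifs with hlt
  · simp only [Set.mem_empty_iff_false, false_iff, not_and, not_le]
    exact fun _ => hlt
  · rw [Set.mem_Icc, le_min_iff, le_min_iff]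
    have := hT.row_le hs
    have := hT.le_south_sub_one hs
    have := hT.le_east hs
    constructor
    · rintro ⟨-, hkey, -⟩
      exact ⟨hkey, not_lt.1 hlt⟩
    · rintro ⟨hkey, -⟩
      exact ⟨‹_›, hkey, ‹_›, ‹_›⟩

end Scan

/-- On a scanning path `P(T;j,i)`, the column of the box defining `E(l,k;j,i)`. -/
def lastBefore (L : List ℕ) (l : ℕ) : ℕ := (L.filter fun h => decide (h < l)).foldr max 0

theorem lastBefore_mem_and_lt {L : List ℕ} {j l : ℕ} (hj : j ∈ L) (hjl : j < l) :
    lastBefore L l ∈ L ∧ lastBefore L l < l := by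
  have hne : L.filter (fun h => decide (h < l)) ≠ [] :=
    List.ne_nil_of_mem (List.mem_filter.2 ⟨hj, decide_eq_true hjl⟩)
  simpa [lastBefore] using List.mem_filter.1 (List.maximum_mem (List.foldr_max_of_ne_nil hne).symm)

theorem le_lastBefore {L : List ℕ} {y l : ℕ} (hy : y ∈ L) (hyl : y < l) :
    y ≤ lastBefore L l :=
  List.le_max_of_le' 0 (List.mem_filter.2 ⟨hy, decide_eq_true hyl⟩) le_rfl

section Bset

variable {n : ℕ} {lam : NPartition n} {T : ℕ → ℕ → ℕ} {p : ℕ → ℕ}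

theorem Epath_of_ne {l k j i : ℕ} (hjl : j ≠ l) :
    Epath lam T l k j i = T (lastBefore (scanPath lam T j i) l)
      (remnant lam T j i (lastBefore (scanPath lam T j i) l)) :=
  if_neg hjl

theorem aIdx_le (hT : IsSSYT lam T) {j l k i : ℕ} (hjl : j < l) (hk : 0 < k)
    (hrem : remnant lam T j i l = k) : aIdx lam T l k j ≤ i := by
  rw [aIdx, if_neg hjl.ne]
  refine Finset.sup_le fun a ha => show a ≤ i from ?_
  obtain ⟨ha, hamem, hak⟩ := Finset.mem_filter.1 ha
  obtain ⟨ha1, haz⟩ := Finset.mem_Icc.1 ha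
  by_contra! hia
  have hstep := remnant_sub_one_of_mem ha1 haz hamem
  have hmono : remnant lam T j i (l - 1) ≤ remnant lam T j (a - 1) (l - 1) :=
    remnant_mono (by omega) _
  have hanti : remnant lam T j i l ≤ remnant lam T j i (l - 1) :=
    (isScanRemnant_remnant hT j i).antitoneOn (show j ≤ l - 1 by omega) hjl.le (by omega)
  omega

theorem lt_bIdx (hT : IsSSYT lam T) {j l k i : ℕ} (hjl : j < l) (hiz : i ≤ zeta lam j)
    (hs : InShape lam l k) (hrem : remnant lam T j i l = k) : i < bIdx lam T l k j := by
  rw [bIdx, if_neg hjl.ne]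
  split_ifs with hkz
  · omega
  obtain ⟨hl1, hk1, hkz'⟩ := inShape_iff.1 hs
  obtain ⟨b, hb1, hbz, hbmem, hbrem⟩ :=
    exists_mem_scanPath hT hjl.le
      (inShape_iff.2 ⟨hl1, by omega, by omega⟩ : InShape lam l (k + 1))
  have hib : i < b := by
    by_contra! hbi
    have := remnant_mono (lam := lam) (T := T) (j := j) hbi l
    omega
  exact hib.trans_le (Finset.le_sup (f := id)
    (Finset.mem_filter.2 ⟨Finset.mem_Icc.2 ⟨hb1, hbz⟩, hbmem, hbrem.symm⟩))

theorem Epath_le {j l k i : ℕ} (hjl : j < l) (hmem : l ∈ scanPath lam T j i)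
    (hrem : remnant lam T j i l = k) : Epath lam T l k j i ≤ T l k := by
  rw [Epath_of_ne hjl.ne, ← hrem]
  obtain ⟨hM, hMl⟩ := lastBefore_mem_and_lt (self_mem_pathColsAux _ _) hjl
  exact bottom_le_bottom_of_mem_pathColsAux_of_lt hM hmem hMl

theorem mem_Bset_of_forall_scanValue_le (hT : IsSSYT lam T)
    (H : ∀ j i, InShape lam j i → scanValue lam T j i ≤ keyTab lam p j i) {l k : ℕ}
    (hs : InShape lam l k) : T l k ∈ Bset lam T p l k := by
  intro j hj1 hjl
  rcases hjl.lt_or_eq with hjl | rfl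
  · obtain ⟨i, hi1, hiz, hmem, hrem⟩ := exists_mem_scanPath hT hjl.le hs
    refine ⟨i, aIdx_le hT hjl (inShape_iff.1 hs).2.1 hrem, lt_bIdx hT hjl hiz hs hrem,
      Epath_le hjl hmem hrem, ?_⟩
    calc T l k = T l (remnant lam T j i l) := by rw [hrem]
      _ ≤ scanValue lam T j i := bottom_le_lastBottom_of_mem_pathColsAux hmem
      _ ≤ keyTab lam p j i := H j i (inShape_iff.2 ⟨hj1, hi1, hiz⟩)
  · refine ⟨k, by rw [aIdx, if_pos rfl], by rw [bIdx, if_pos rfl], ?_,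
      ((scanValue_le_iff hT hs).1 (H j k hs)).1⟩
    rw [Epath, if_pos rfl]
    exact hT.row_le hs

theorem le_keyTab_of_mem_Bset {l k : ℕ} (hl : 1 ≤ l) (h : T l k ∈ Bset lam T p l k) :
    T l k ≤ keyTab lam p l k := by
  obtain ⟨i, hia, hib, -, hikey⟩ := h l hl le_rfl
  rw [aIdx, if_pos rfl] at hia
  rw [bIdx, if_pos rfl] at hib
  obtain rfl : i = k := by omega
  exact hikey

theorem remnant_le_of_lt_bIdx (hT : IsSSYT lam T) {l h m i : ℕ} (hlh : l ≠ h)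
    (hib : i < bIdx lam T h m l) : remnant lam T l i h ≤ m := by
  rw [bIdx, if_neg hlh] at hib
  split_ifs at hib with hmz
  · exact hmz ▸ (isScanRemnant_remnant hT l i).le_zeta h
  obtain ⟨i₀, hi₀, hii₀ : i < i₀⟩ := Finset.lt_sup_iff.1 hib
  obtain ⟨hi₀, hi₀mem, hi₀rem⟩ := Finset.mem_filter.1 hi₀
  obtain ⟨hi₀1, hi₀z⟩ := Finset.mem_Icc.1 hi₀
  have hstep := remnant_sub_one_of_mem hi₀1 hi₀z hi₀mem
  have := remnant_mono (lam := lam) (T := T) (j := l) (show i ≤ i₀ - 1 by omega) h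
  omega

theorem mem_scanPath_of_Epath_le {l h i : ℕ} (hlh : l < h) (hhm : h ≤ lam.part 1)
    (hch : 0 < remnant lam T l i h)
    (hE : Epath lam T h (remnant lam T l i h) l i ≤ T h (remnant lam T l i h)) :
    h ∈ scanPath lam T l i := by
  rw [Epath_of_ne hlh.ne] at hE
  obtain ⟨hM, hMh⟩ := lastBefore_mem_and_lt (self_mem_pathColsAux _ _) hlh
  exact mem_pathColsAux_of_le (Nat.le_add_right _ _) hM (fun _ hy hyh => le_lastBefore hy hyh)
    hMh hhm hch hE

theorem bottom_le_keyTab_of_forall_mem_Bset (hp : Set.InjOn p (Set.Icc 1 n)) (hT : IsSSYT lam T)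
    (H : ∀ l k, InShape lam l k → T l k ∈ Bset lam T p l k) {l k h : ℕ}
    (hs : InShape lam l k) (hlh : l < h) (hhm : h ≤ lam.part 1) (hch : 0 < remnant lam T l k h) :
    T h (remnant lam T l k h) ≤ keyTab lam p l k := by
  set m := remnant lam T l k h
  obtain ⟨hl1, -, -⟩ := inShape_iff.1 hs
  have hsh : InShape lam h m :=
    inShape_iff.2 ⟨by omega, hch, (isScanRemnant_remnant hT l k).le_zeta h⟩
  obtain ⟨i, -, hib, hiE, hikey⟩ := H h m hsh l hl1 hlh.le
  obtain ⟨-, hi1, hiz⟩ := inShape_iff.1 (inShape_of_keyTab_pos ((hT.one_le hsh).trans hikey))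
  refine hikey.trans (keyTab_mono hp hi1 ?_ hs)
  by_contra! hki
  -- `(h, m)` is still a bottom box of `T^{(l;i)}`, so it lies on `P(T;l,i)` and is gone from
  -- `T^{(l;i-1)} ⊇ T^{(l;k)}`
  have hmi : remnant lam T l i h = m :=
    le_antisymm (remnant_le_of_lt_bIdx hT hlh.ne hib) (remnant_mono hki.le h)
  have hpath : h ∈ scanPath lam T l i :=
    mem_scanPath_of_Epath_le hlh hhm (hmi ▸ hch) (hmi ▸ hiE)
  have := remnant_sub_one_of_mem hi1 hiz hpath
  have := remnant_mono (lam := lam) (T := T) (j := l) (show k ≤ i - 1 by omega) h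
  omega

theorem scanValue_le_of_forall_mem_Bset (hp : Set.InjOn p (Set.Icc 1 n)) (hT : IsSSYT lam T)
    (H : ∀ l k, InShape lam l k → T l k ∈ Bset lam T p l k) {l k : ℕ}
    (hs : InShape lam l k) : scanValue lam T l k ≤ keyTab lam p l k := by
  have hkey := le_keyTab_of_mem_Bset (inShape_iff.1 hs).1 (H l k hs)
  rw [scanValue_le_iff hT hs, mEast_le_iff]
  exact ⟨hkey, (hT.one_le hs).trans hkey,
    fun _ hlh hhm hch => bottom_le_keyTab_of_forall_mem_Bset hp hT H hs hlh hhm hch⟩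

end Bset

theorem Aset_iff_Bset_general (n : ℕ) (lam : NPartition n)
    (p : ℕ → ℕ) (hp : IsNPerm n p) (T : ℕ → ℕ → ℕ) (hT : IsSSYT lam T) :
    ((∀ j i, InShape lam j i → scanValue lam T j i ≤ keyTab lam p j i) ↔
      (∀ l k, InShape lam l k → T l k ∈ Aset lam T p l k)) ∧
    ((∀ j i, InShape lam j i → scanValue lam T j i ≤ keyTab lam p j i) ↔
      (∀ l k, InShape lam l k → T l k ∈ Bset lam T p l k)) :=
  ⟨forall₂_congr fun _ _ => forall_congr' fun hs => (mem_Aset_iff_scanValue_le hT hs).symm,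
    fun H _ _ hs => mem_Bset_of_forall_scanValue_le hT H hs,
    fun H _ _ hs => scanValue_le_of_forall_mem_Bset hp.injOn hT H hs⟩

/-- Theorem 10.1.  The conditions (i) `S(T) ≤ Y_λ(π)`,
(ii) all entries lie in the `A`-sets, and (iii) all entries lie in the
`B`-sets, are equivalent. -/
theorem Aset_iff_Bset (n : ℕ) (hn : 1 ≤ n) (lam : NPartition n)
    (p : ℕ → ℕ) (hp : IsNPerm n p) (T : ℕ → ℕ → ℕ) (hT : IsSSYT lam T) :
    ((∀ j i, InShape lam j i → scanValue lam T j i ≤ keyTab lam p j i) ↔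
      (∀ l k, InShape lam l k → T l k ∈ Aset lam T p l k)) ∧
    ((∀ j i, InShape lam j i → scanValue lam T j i ≤ keyTab lam p j i) ↔
      (∀ l k, InShape lam l k → T l k ∈ Bset lam T p l k)) :=
  Aset_iff_Bset_general n lam p hp T hT

end KeyPoly
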